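/- arXiv:1906.07962 — 4 statements merged into one kernel-verified Lean document; each statement's English description precedes it below -/
import Mathlib

section
/- With Ω the disk-slice {(x,y) : α < x < β, -√(1-x²) < y < √(1-x²)} for 0 < α < β < 1, ρ(x) = √(1-x²), and H_{n,k}^{(a,b,c)}(x,y) := R_{n-k}^{(a,b,2c+2k+1)}(x) ρ(x)^k P_k^{(c,c)}(y/ρ(x)), where R_m^{(a,b,c)} are orthonormal on (α,β) with respect to (β-x)^a (x-α)^b ρ(x)^c and P_k^{(c,c)} are orthonormal Jacobi polynomials on (-1,1) with respect to (1-x²)^c, one has ⟨H_{n,k}^{(a,b,c)}, H_{m,j}^{(a,b,c)}⟩_{W^{(a,b,c)}} = ω_R^{(a,b,2c+2k+1)} ω_P^{(c)} δ_{n,m} δ_{k,j}, where W^{(a,b,c)}(x,y) = (β-x)^a (x-α)^b (1-x²-y²)^c, ω_R^{(a,b,c)} = ∫_α^β (β-x)^a (x-α)^b ρ(x)^c dx and ω_P^{(c)} = ∫_{-1}^1 (1-t²)^c dt. -/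
/-!
Substituting `y = ρ(x) t` maps the rectangle `(α, β) × (-1, 1)` bijectively onto the disk slice,
with Jacobian `ρ(x)`. Since `1 - x² - ρ(x)² t² = ρ(x)² (1 - t²)`, the transformed integrand of
`H_{n,k} H_{m,j} W` splits as a function of `x` times `P_k(t) P_j(t) (1 - t²)^c`, so by Fubini the
integral is a product of two one-dimensional integrals. The `t`-integral is `ω_P δ_{k,j}`, and when
`k = j` the `x`-integral is the orthonormality relation of `R^{(a,b,2c+2k+1)}`.
-/

open MeasureTheory Set

noncomputable def shearCLM (r d : ℝ) : (ℝ × ℝ) →L[ℝ] (ℝ × ℝ) :=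
  (ContinuousLinearMap.fst ℝ ℝ ℝ).prod
    (d • ContinuousLinearMap.fst ℝ ℝ ℝ + r • ContinuousLinearMap.snd ℝ ℝ ℝ)

lemma det_shearCLM (r d : ℝ) : (shearCLM r d).det = r := by
  change LinearMap.det (shearCLM r d : (ℝ × ℝ) →ₗ[ℝ] (ℝ × ℝ)) = r
  rw [← LinearMap.det_toMatrix (Module.Basis.finTwoProd ℝ), Matrix.det_fin_two]
  simp [LinearMap.toMatrix_apply, shearCLM, Module.Basis.finTwoProd_zero,
    Module.Basis.finTwoProd_one, Module.Basis.coe_finTwoProd_repr]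

def fiberScale (ρ : ℝ → ℝ) (p : ℝ × ℝ) : ℝ × ℝ := (p.1, ρ p.1 * p.2)

section fiberScale

variable {ρ : ℝ → ℝ} {I : Set ℝ}

lemma hasFDerivAt_fiberScale {ρ' x : ℝ} (hρ : HasDerivAt ρ ρ' x) (t : ℝ) :
    HasFDerivAt (fiberScale ρ) (shearCLM (ρ x) (ρ' * t)) (x, t) := by
  have hfst := hasFDerivAt_fst (𝕜 := ℝ) (p := (x, t))
  have hsnd := hasFDerivAt_snd (𝕜 := ℝ) (p := (x, t))
  refine (hfst.prodMk ((hρ.comp_hasFDerivAt (x, t) hfst).mul hsnd)).congr_fderiv ?_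
  ext <;> simp [shearCLM]
  ring

lemma injOn_fiberScale (hρ : ∀ x ∈ I, ρ x ≠ 0) (J : Set ℝ) : InjOn (fiberScale ρ) (I ×ˢ J) := by
  rintro ⟨x, t⟩ hp ⟨x', t'⟩ - h
  simp only [fiberScale, Prod.mk.injEq] at h
  obtain ⟨rfl, h⟩ := h
  rw [mul_left_cancel₀ (hρ x hp.1) h]

lemma image_fiberScale_Ioo (hρ : ∀ x ∈ I, 0 < ρ x) :
    fiberScale ρ '' (I ×ˢ Ioo (-1) 1) = {z | z.1 ∈ I ∧ |z.2| < ρ z.1} := by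
  ext ⟨x, y⟩
  simp only [fiberScale, mem_image, mem_prod, mem_Ioo, Prod.mk.injEq, Prod.exists, mem_ofPred_eq]
  constructor
  · rintro ⟨x, t, ⟨hx, ht⟩, rfl, rfl⟩
    rw [abs_mul, abs_of_pos (hρ x hx)]
    exact ⟨hx, mul_lt_of_lt_one_right (hρ x hx) (abs_lt.2 ht)⟩
  · rintro ⟨hx, hy⟩
    have hρx := hρ x hx
    refine ⟨x, y / ρ x, ⟨hx, ?_⟩, rfl, mul_div_cancel₀ y hρx.ne'⟩
    rwa [← abs_lt, abs_div, abs_of_pos hρx, div_lt_one hρx]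

theorem setIntegral_image_fiberScale {ρ' : ℝ → ℝ} {J : Set ℝ} (hI : MeasurableSet I)
    (hJ : MeasurableSet J) (hρ : ∀ x ∈ I, 0 < ρ x) (hρ' : ∀ x ∈ I, HasDerivAt ρ (ρ' x) x)
    (f : ℝ × ℝ → ℝ) :
    ∫ z in fiberScale ρ '' (I ×ˢ J), f z = ∫ p in I ×ˢ J, ρ p.1 * f (p.1, ρ p.1 * p.2) := by
  rw [integral_image_eq_integral_abs_det_fderiv_smul volume (hI.prod hJ)
    (fun p hp => (hasFDerivAt_fiberScale (hρ' p.1 hp.1) p.2).hasFDerivWithinAt)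
    (injOn_fiberScale (fun x hx => (hρ x hx).ne') J)]
  refine setIntegral_congr_fun (hI.prod hJ) fun p hp => ?_
  rw [det_shearCLM, abs_of_pos (hρ p.1 hp.1), smul_eq_mul, fiberScale]

end fiberScale

theorem setIntegral_diskSlice_eq_mul {α β : ℝ} (hα : -1 ≤ α) (hβ : β ≤ 1)
    {f : ℝ × ℝ → ℝ} {g h : ℝ → ℝ}
    (hfg : ∀ x ∈ Ioo α β, ∀ t ∈ Ioo (-1 : ℝ) 1,
      Real.sqrt (1 - x ^ 2) * f (x, Real.sqrt (1 - x ^ 2) * t) = g x * h t) :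
    ∫ z in {z : ℝ × ℝ | α < z.1 ∧ z.1 < β ∧ z.2 ^ 2 < 1 - z.1 ^ 2}, f z =
      (∫ x in Ioo α β, g x) * ∫ t in Ioo (-1 : ℝ) 1, h t := by
  have hI : ∀ x ∈ Ioo α β, 0 < 1 - x ^ 2 := fun x hx => by
    nlinarith [hα.trans_lt hx.1, hx.2.trans_le hβ]
  have hρ : ∀ x ∈ Ioo α β, 0 < Real.sqrt (1 - x ^ 2) := fun x hx => Real.sqrt_pos.2 (hI x hx)
  have hslice : {z : ℝ × ℝ | α < z.1 ∧ z.1 < β ∧ z.2 ^ 2 < 1 - z.1 ^ 2} =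
      fiberScale (fun x => Real.sqrt (1 - x ^ 2)) '' (Ioo α β ×ˢ Ioo (-1) 1) := by
    rw [image_fiberScale_Ioo hρ]
    ext z
    simp only [mem_ofPred_eq, mem_Ioo, Real.lt_sqrt (abs_nonneg _), sq_abs, and_assoc]
  rw [hslice, setIntegral_image_fiberScale measurableSet_Ioo measurableSet_Ioo hρ
      (fun x hx => ((hasDerivAt_id x).pow 2 |>.const_sub 1).sqrt (hI x hx).ne'),
    setIntegral_congr_fun (measurableSet_Ioo.prod measurableSet_Ioo) fun p hp => hfg _ hp.1 _ hp.2,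
    Measure.volume_eq_prod, setIntegral_prod_mul]

lemma pow_mul_pow_mul_rpow_sq_mul {r s : ℝ} (hr : 0 < r) (hs : 0 ≤ s) (k j : ℕ) (c : ℝ) :
    r ^ k * r ^ j * (r ^ 2 * s) ^ c * r = r ^ ((k : ℝ) + j + 2 * c + 1) * s ^ c := by
  rw [Real.mul_rpow (by positivity) hs, ← Real.rpow_natCast r 2, ← Real.rpow_mul hr.le,
    ← Real.rpow_natCast r k, ← Real.rpow_natCast r j, Real.rpow_add_one hr.ne',
    Real.rpow_add hr, Real.rpow_add hr]
  push_cast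
  ring

lemma eq_mul_ite_of_normalized {ω : ℝ} {I : ℕ → ℕ → ℝ}
    (h : ∀ m n, 1 / ω * I m n = if m = n then 1 else 0) (m n : ℕ) :
    I m n = ω * if m = n then 1 else 0 := by
  have hω : ω ≠ 0 := by
    have hmm := h m m
    rw [if_pos rfl] at hmm
    exact ne_zero_of_one_div_ne_zero (left_ne_zero_of_mul_eq_one hmm)
  rw [← inv_mul_eq_iff_eq_mul₀ hω, ← one_div, h]

theorem stmt1_general
    (α β : ℝ) (h0 : 0 < α) (hβ : β < 1)
    (a b c : ℝ)
    (R : ℝ → ℕ → ℝ → ℝ) (P : ℕ → ℝ → ℝ)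
    (ωR : ℝ → ℝ) (ωP : ℝ)
    (hRorth : ∀ e m n, (1 / ωR e) * ∫ x in Ioo α β,
        R e m x * R e n x * ((β - x) ^ a * (x - α) ^ b * Real.sqrt (1 - x ^ 2) ^ e)
        = if m = n then 1 else 0)
    (hPorth : ∀ k j, (1 / ωP) * ∫ t in Ioo (-1 : ℝ) 1,
        P k t * P j t * (1 - t ^ 2) ^ c = if k = j then 1 else 0)
    (Ω : Set (ℝ × ℝ))
    (hΩ : Ω = {z : ℝ × ℝ | α < z.1 ∧ z.1 < β ∧ z.2 ^ 2 < 1 - z.1 ^ 2})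
    (H : ℕ → ℕ → ℝ × ℝ → ℝ)
    (hH : ∀ n k z, H n k z = R (2 * c + 2 * (k : ℝ) + 1) (n - k) z.1 *
        Real.sqrt (1 - z.1 ^ 2) ^ (k : ℕ) * P k (z.2 / Real.sqrt (1 - z.1 ^ 2)))
    (W : ℝ × ℝ → ℝ)
    (hW : ∀ z : ℝ × ℝ,
      W z = (β - z.1) ^ a * (z.1 - α) ^ b * (1 - z.1 ^ 2 - z.2 ^ 2) ^ c) :
    ∀ n k m j, k ≤ n → j ≤ m →
      ∫ z in Ω, H n k z * H m j z * W z =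
        ωR (2 * c + 2 * (k : ℝ) + 1) * ωP *
          ((if n = m then (1 : ℝ) else 0) * (if k = j then (1 : ℝ) else 0)) := by
  intro n k m j hkn hjm
  have hfactor : ∀ x ∈ Ioo α β, ∀ t ∈ Ioo (-1 : ℝ) 1,
      Real.sqrt (1 - x ^ 2) * (H n k (x, Real.sqrt (1 - x ^ 2) * t) *
        H m j (x, Real.sqrt (1 - x ^ 2) * t) * W (x, Real.sqrt (1 - x ^ 2) * t)) =
      R (2 * c + 2 * k + 1) (n - k) x * R (2 * c + 2 * j + 1) (m - j) x *
          ((β - x) ^ a * (x - α) ^ b * Real.sqrt (1 - x ^ 2) ^ ((k : ℝ) + j + 2 * c + 1)) *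
        (P k t * P j t * (1 - t ^ 2) ^ c) := by
    intro x hx t ht
    have hx2 : 0 < 1 - x ^ 2 := by nlinarith [h0.trans hx.1, hx.2.trans hβ]
    have hρ := Real.sqrt_pos.2 hx2
    have hsq : 1 - x ^ 2 - (Real.sqrt (1 - x ^ 2) * t) ^ 2 =
        Real.sqrt (1 - x ^ 2) ^ 2 * (1 - t ^ 2) := by
      rw [mul_pow, Real.sq_sqrt hx2.le]; ring
    simp only [hH, hW, mul_div_cancel_left₀ t hρ.ne', hsq]
    linear_combination (R (2 * c + 2 * k + 1) (n - k) x * R (2 * c + 2 * j + 1) (m - j) x *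
        P k t * P j t * (β - x) ^ a * (x - α) ^ b) *
      pow_mul_pow_mul_rpow_sq_mul hρ (by nlinarith [ht.1, ht.2] : (0 : ℝ) ≤ 1 - t ^ 2) k j c
  rw [hΩ, setIntegral_diskSlice_eq_mul (by linarith) hβ.le hfactor,
    eq_mul_ite_of_normalized hPorth k j]
  rcases eq_or_ne k j with rfl | hkj
  · rw [show (k : ℝ) + k + 2 * c + 1 = 2 * c + 2 * k + 1 by ring,
      eq_mul_ite_of_normalized (hRorth _) (n - k) (m - k)]
    simp only [tsub_left_inj hkn hjm]
    ring
  · simp [hkj]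

/-- orthogonality and normalization of the disk-slice OPs
`H_{n,k}^{(a,b,c)}` with respect to the weight `W^{(a,b,c)}`. -/
theorem stmt1
    (α β : ℝ) (h0 : 0 < α) (hαβ : α < β) (hβ : β < 1)
    (a b c : ℝ)
    (R : ℝ → ℕ → ℝ → ℝ) (P : ℕ → ℝ → ℝ)
    (ωR : ℝ → ℝ) (ωP : ℝ)
    (hωR : ∀ e, ωR e =
      ∫ x in Ioo α β, (β - x) ^ a * (x - α) ^ b * Real.sqrt (1 - x ^ 2) ^ e)
    (hωP : ωP = ∫ t in Ioo (-1 : ℝ) 1, (1 - t ^ 2) ^ c)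
    (hRorth : ∀ e m n, (1 / ωR e) * ∫ x in Ioo α β,
        R e m x * R e n x * ((β - x) ^ a * (x - α) ^ b * Real.sqrt (1 - x ^ 2) ^ e)
        = if m = n then 1 else 0)
    (hRpoly : ∀ e m, ∃ p : Polynomial ℝ, p.natDegree = m ∧ ∀ x, R e m x = p.eval x)
    (hPorth : ∀ k j, (1 / ωP) * ∫ t in Ioo (-1 : ℝ) 1,
        P k t * P j t * (1 - t ^ 2) ^ c = if k = j then 1 else 0)
    (hPpoly : ∀ k, ∃ p : Polynomial ℝ, p.natDegree = k ∧ ∀ t, P k t = p.eval t)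
    (Ω : Set (ℝ × ℝ))
    (hΩ : Ω = {z : ℝ × ℝ | α < z.1 ∧ z.1 < β ∧ z.2 ^ 2 < 1 - z.1 ^ 2})
    (H : ℕ → ℕ → ℝ × ℝ → ℝ)
    (hH : ∀ n k z, H n k z = R (2 * c + 2 * (k : ℝ) + 1) (n - k) z.1 *
        Real.sqrt (1 - z.1 ^ 2) ^ (k : ℕ) * P k (z.2 / Real.sqrt (1 - z.1 ^ 2)))
    (W : ℝ × ℝ → ℝ)
    (hW : ∀ z : ℝ × ℝ,
      W z = (β - z.1) ^ a * (z.1 - α) ^ b * (1 - z.1 ^ 2 - z.2 ^ 2) ^ c) :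
    ∀ n k m j, k ≤ n → j ≤ m →
      ∫ z in Ω, H n k z * H m j z * W z =
        ωR (2 * c + 2 * (k : ℝ) + 1) * ωP *
          ((if n = m then (1 : ℝ) else 0) * (if k = j then (1 : ℝ) else 0)) :=
  stmt1_general α β h0 hβ a b c R P ωR ωP hRorth hPorth Ω hΩ H hH W hW
end

section
/- For the disk-slice OPs H_{n,k}^{(a,b,c)}, multiplication by x satisfies a three-term recurrence in the degree index: x H_{n,k}^{(a,b,c)}(x,y) = α_{n,k,1} H_{n-1,k}^{(a,b,c)}(x,y) + α_{n,k,2} H_{n,k}^{(a,b,c)}(x,y) + α_{n+1,k,1} H_{n+1,k}^{(a,b,c)}(x,y), where α_{n,k,1} and α_{n,k,2} are the recurrence coefficients of the univariate orthonormal polynomials R_m^{(a,b,2c+2k+1)} (i.e., the off-diagonal and diagonal Jacobi matrix entries). -/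
open MeasureTheory Set

/-- three-term recurrence in the degree index for multiplication by
`x` on the disk-slice OPs, with coefficients from the univariate Jacobi matrix
of the family `R^{(a,b,2c+2k+1)}`. -/
theorem stmt2
    (c : ℝ)
    (R : ℝ → ℕ → ℝ → ℝ)
    (A B : ℝ → ℕ → ℝ)
    -- three-term recurrence of the univariate orthonormal polynomials:
    -- x R_m = β_m R_{m+1} + α_m R_m + β_{m-1} R_{m-1} (with β_{-1} term absent)
    (hrec : ∀ e m x, x * R e m x =
      B e m * R e (m + 1) x + A e m * R e m x +
        (if m = 0 then 0 else B e (m - 1) * R e (m - 1) x))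
    (P : ℕ → ℝ → ℝ)
    (H : ℕ → ℕ → ℝ × ℝ → ℝ)
    (hH : ∀ n k z, H n k z = R (2 * c + 2 * (k : ℝ) + 1) (n - k) z.1 *
        Real.sqrt (1 - z.1 ^ 2) ^ (k : ℕ) * P k (z.2 / Real.sqrt (1 - z.1 ^ 2))) :
    ∀ n k, k ≤ n → ∀ z : ℝ × ℝ,
      z.1 * H n k z =
        (if k < n then
            B (2 * c + 2 * (k : ℝ) + 1) (n - k - 1) * H (n - 1) k z
          else 0)
        + A (2 * c + 2 * (k : ℝ) + 1) (n - k) * H n k z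
        + B (2 * c + 2 * (k : ℝ) + 1) (n - k) * H (n + 1) k z := by
  intro n k hk z
  set e := 2 * c + 2 * (k : ℝ) + 1 with he
  have h1 : (n + 1) - k = (n - k) + 1 := by omega
  rw [hH n k z, hH (n+1) k z, h1]
  rcases eq_or_lt_of_le hk with heq | hlt
  · subst heq
    simp only [lt_irrefl, if_false, Nat.sub_self]
    have h0 := hrec e 0 z.1
    rw [if_pos rfl] at h0
    linear_combination (Real.sqrt (1 - z.1 ^ 2) ^ (k:ℕ) * P k (z.2 / Real.sqrt (1 - z.1 ^ 2))) * h0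
  · rw [if_pos hlt, hH (n-1) k z]
    have h2 : (n - 1) - k = (n - k) - 1 := by omega
    rw [h2]
    have hm : n - k ≠ 0 := by omega
    have h0 := hrec e (n - k) z.1
    rw [if_neg hm] at h0
    linear_combination (Real.sqrt (1 - z.1 ^ 2) ^ (k:ℕ) * P k (z.2 / Real.sqrt (1 - z.1 ^ 2))) * h0
end

section
/- In the setting of the Christoffel–Darboux-based construction: the recurrence coefficients of the orthonormal polynomials for the incremented weight w̃^{(a,b,c+1,d)} are given in terms of those for w̃^{(a,b,c,d)} by α̃_n^{(a,b,c+1,d)} = (R̃_{n+2}(1)/R̃_{n+1}(1)) β̃_{n+1} − (R̃_{n+1}(1)/R̃_n(1)) β̃_n + α̃_{n+1} and β̃_n^{(a,b,c+1,d)} = (C_n/C_{n+1}) (R̃_n(1)/R̃_{n+1}(1)) β̃_n, where all unsuperscripted quantities refer to the (a,b,c,d) family and C_n is the Christoffel–Darboux normalization constant. -/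
/-!
With `K_n(x, y) = ∑_{k ≤ n} R_k(y) R_k(x)`, the Christoffel–Darboux identity
`(x - y) K_n(x, y) = B_n (R_n(y) R_{n+1}(x) - R_{n+1}(y) R_n(x))` and
`R_k(y) R_k(x) = K_k(x, y) - K_{k-1}(x, y)` turn `x K_n(x, y)` into a combination of
`K_{n+1}, K_n, K_{n-1}`; the constant term is simplified by the recurrence at `x = y`.
This recurrence is not symmetric, but the normalisation
`C_n² R_n(1) R_{n+1}(1) B_n = ω_{c+1} / ω_c` makes that of `C_n K_n(·, 1)` symmetric. Since
`C_n K_n(·, 1)` has exact degree `n`, the coefficients of a three-term recurrence for it are unique,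
which identifies them.
-/

section

open Finset Polynomial

variable {K : Type*} [Field K]

def ThreeTermRecurrence (R : ℕ → K → K) (A B : ℕ → K) : Prop :=
  ∀ n x, x * R n x = B n * R (n + 1) x + A n * R n x +
    (if n = 0 then 0 else B (n - 1) * R (n - 1) x)

def christoffelKernel (R : ℕ → K → K) (y : K) (n : ℕ) (x : K) : K :=
  ∑ k ∈ range (n + 1), R k y * R k x

theorem Polynomial.eq_zero_of_forall_mul_eval_add_mul_eval_eq_zero [Infinite K] {P Q : K[X]}
    {n : ℕ} (hP : P.degree = ↑(n + 1)) (hQ : Q.degree = n) {u v : K}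
    (h : ∀ x, u * P.eval x + v * Q.eval x = 0) : u = 0 ∧ v = 0 := by
  have hzero : C u * P + C v * Q = 0 := Polynomial.funext fun x => by simpa using h x
  have hQtop : Q.coeff (n + 1) = 0 :=
    coeff_eq_zero_of_degree_lt (by rw [hQ]; exact_mod_cast n.lt_succ_self)
  have hu : u = 0 := by
    have h1 := congrArg (coeff · (n + 1)) hzero
    simp only [coeff_add, coeff_C_mul, hQtop, mul_zero, add_zero, coeff_zero] at h1
    exact (mul_eq_zero.1 h1).resolve_right (coeff_ne_zero_of_eq_degree hP)
  have h0 := congrArg (coeff · n) hzero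
  simp only [hu, coeff_add, coeff_C_mul, zero_mul, zero_add, coeff_zero] at h0
  exact ⟨hu, (mul_eq_zero.1 h0).resolve_right (coeff_ne_zero_of_eq_degree hQ)⟩

theorem Polynomial.degree_sum_range_smul {p : ℕ → K[X]} (hp : ∀ k, (p k).degree = k) {c : ℕ → K}
    {n : ℕ} (hc : c n ≠ 0) : (∑ k ∈ range (n + 1), c k • p k).degree = n := by
  have hlow : (∑ k ∈ range n, c k • p k).degree < n :=
    (degree_sum_le _ _).trans_lt <| (Finset.sup_lt_iff (WithBot.bot_lt_coe n)).2 fun k hk =>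
      (degree_smul_le _ _).trans_lt (by rw [hp]; exact WithBot.coe_lt_coe.2 (mem_range.1 hk))
  have htop : (c n • p n).degree = n := by rw [smul_eq_C_mul, degree_C_mul hc, hp]
  rw [sum_range_succ, degree_add_eq_right_of_degree_lt (htop ▸ hlow), htop]

theorem exists_degree_eq_mul_christoffelKernel {R : ℕ → K → K}
    (hR : ∀ n : ℕ, ∃ p : K[X], p.degree = n ∧ ∀ x, R n x = p.eval x) {y c : K} {n : ℕ}
    (hy : R n y ≠ 0) (hc : c ≠ 0) :
    ∃ q : K[X], q.degree = n ∧ ∀ x, c * christoffelKernel R y n x = q.eval x := by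
  choose p hpdeg hp using hR
  refine ⟨∑ k ∈ range (n + 1), (c * R k y) • p k,
    degree_sum_range_smul hpdeg (mul_ne_zero hc hy), fun x => ?_⟩
  simp only [christoffelKernel, eval_finsetSum, eval_smul, smul_eq_mul, mul_sum, hp, mul_assoc]

namespace ThreeTermRecurrence

variable {R : ℕ → K → K} {A B : ℕ → K}

theorem succ (hR : ThreeTermRecurrence R A B) (n : ℕ) (x : K) :
    x * R (n + 1) x = B (n + 1) * R (n + 2) x + A (n + 1) * R (n + 1) x + B n * R n x := by
  simpa using hR (n + 1) x

theorem christoffel_darboux (hR : ThreeTermRecurrence R A B) (y x : K) (n : ℕ) :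
    (x - y) * christoffelKernel R y n x = B n * (R n y * R (n + 1) x - R (n + 1) y * R n x) := by
  induction n with
  | zero =>
    have hx := hR 0 x
    have hy := hR 0 y
    simp only [christoffelKernel, zero_add, sum_range_one, if_pos, add_zero] at hx hy ⊢
    linear_combination R 0 y * hx - R 0 x * hy
  | succ m ih =>
    rw [christoffelKernel, sum_range_succ, ← christoffelKernel]
    linear_combination ih + R (m + 1) y * hR.succ m x - R (m + 1) x * hR.succ m y

/-- The last sum is `K_{n-1}(x, y)`, written so that it vanishes for `n = 0`. -/
theorem christoffelKernel_recurrence (hR : ThreeTermRecurrence R A B) {y : K}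
    (hy : ∀ n, R n y ≠ 0) (n : ℕ) (x : K) :
    x * christoffelKernel R y n x =
      R n y / R (n + 1) y * B n * christoffelKernel R y (n + 1) x
      + (R (n + 2) y / R (n + 1) y * B (n + 1) - R (n + 1) y / R n y * B n + A (n + 1))
        * christoffelKernel R y n x
      + R (n + 1) y / R n y * B n * ∑ k ∈ range n, R k y * R k x := by
  have hcd := hR.christoffel_darboux y x n
  have hsucc := hR.succ n y
  have hn := hy n
  have hn1 := hy (n + 1)
  simp only [christoffelKernel, sum_range_succ] at hcd ⊢
  field_simp
  linear_combination (R n y * R (n + 1) y) * hcd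
    + R n y * (∑ k ∈ range n, R k y * R k x + R n y * R n x) * hsucc

theorem mul_christoffelKernel {y : K} (hR : ThreeTermRecurrence R A B) (hy : ∀ n, R n y ≠ 0)
    {C : ℕ → K} (hC : ∀ n, C n ≠ 0) {κ : K} (hκ : ∀ n, C n ^ 2 * (R n y * R (n + 1) y * B n) = κ) :
    ThreeTermRecurrence (fun n x => C n * christoffelKernel R y n x)
      (fun n => R (n + 2) y / R (n + 1) y * B (n + 1) - R (n + 1) y / R n y * B n + A (n + 1))
      (fun n => C n / C (n + 1) * (R n y / R (n + 1) y) * B n) := by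
  intro n x
  have hK := hR.christoffelKernel_recurrence hy n x
  have hy0 := hy n
  have hy1 := hy (n + 1)
  have hC0 := hC n
  have hC1 := hC (n + 1)
  cases n with
  | zero =>
    simp only [sum_range_zero, mul_zero, add_zero, zero_add] at hK hy1 hC1 ⊢
    simp only [if_pos]
    field_simp at hK ⊢
    linear_combination C 0 * hK
  | succ m =>
    have hym := hy m
    have hCm := hC m
    simp only [Nat.add_one_ne_zero, if_false, Nat.add_sub_cancel]
    rw [← christoffelKernel] at hK
    simp only [add_assoc, Nat.reduceAdd] at hK hy1 hC1 ⊢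
    field_simp at hK ⊢
    have hsym : C m ^ 2 * (R m y * B m) = C (m + 1) ^ 2 * (R (m + 2) y * B (m + 1)) :=
      mul_left_cancel₀ hy0 (by linear_combination hκ m - hκ (m + 1))
    linear_combination C (m + 1) ^ 2 * hK - R (m + 2) y * christoffelKernel R y m x * hsym

theorem unique [Infinite K] {S : ℕ → K → K} {A B A' B' : ℕ → K}
    (hS : ∀ n : ℕ, ∃ q : K[X], q.degree = n ∧ ∀ x, S n x = q.eval x)
    (h : ThreeTermRecurrence S A B) (h' : ThreeTermRecurrence S A' B') (n : ℕ) :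
    A n = A' n ∧ B n = B' n := by
  choose q hqdeg hq using hS
  have step (n : ℕ) (hprev : n ≠ 0 → B (n - 1) = B' (n - 1)) : A n = A' n ∧ B n = B' n := by
    obtain ⟨hB, hA⟩ := eq_zero_of_forall_mul_eval_add_mul_eval_eq_zero (hqdeg (n + 1)) (hqdeg n)
      (u := B n - B' n) (v := A n - A' n) fun x => by
        have hx := h n x
        have hx' := h' n x
        rw [← hq, ← hq]
        split_ifs at hx hx' with hn
        · linear_combination hx' - hx
        · linear_combination hx' - hx - S (n - 1) x * hprev hn
    exact ⟨sub_eq_zero.1 hA, sub_eq_zero.1 hB⟩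
  induction n with
  | zero => exact step 0 (absurd rfl)
  | succ m ih => exact step (m + 1) fun _ => ih.2

end ThreeTermRecurrence

end

open MeasureTheory Set

theorem stmt15_general
    (c : ℝ)
    (ω : ℝ → ℝ)
    (R : ℕ → ℝ → ℝ)
    (hRpoly : ∀ n, ∃ p : Polynomial ℝ, p.natDegree = n ∧ ∀ x, R n x = p.eval x)
    (A B : ℕ → ℝ)
    (hrec : ∀ n x, x * R n x = B n * R (n + 1) x + A n * R n x +
      (if n = 0 then 0 else B (n - 1) * R (n - 1) x))
    (hR1ne : ∀ n, R n 1 ≠ 0)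
    (hpos : ∀ n, 0 < ω c * R n 1 * R (n + 1) 1 * B n)
    (C : ℕ → ℝ)
    (hC : ∀ n, C n = Real.sqrt (ω (c + 1) / (ω c * R n 1 * R (n + 1) 1 * B n)))
    (hCne : ∀ n, C n ≠ 0)
    -- the orthonormal family for the incremented weight, given by the
    -- Christoffel--Darboux sums
    (R' : ℕ → ℝ → ℝ)
    (hR' : ∀ n x, R' n x = C n * ∑ k ∈ Finset.range (n + 1), R k 1 * R k x)
    (A' B' : ℕ → ℝ)
    (hrec' : ∀ n x, x * R' n x = B' n * R' (n + 1) x + A' n * R' n x +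
      (if n = 0 then 0 else B' (n - 1) * R' (n - 1) x)) :
    ∀ n, A' n = (R (n + 2) 1 / R (n + 1) 1) * B (n + 1)
        - (R (n + 1) 1 / R n 1) * B n + A (n + 1) ∧
      B' n = (C n / C (n + 1)) * (R n 1 / R (n + 1) 1) * B n := by
  have hωc : ω c ≠ 0 := by
    rintro h
    simpa [h] using hpos 0
  have hκ (n : ℕ) : C n ^ 2 * (R n 1 * R (n + 1) 1 * B n) = ω (c + 1) / ω c := by
    have hD := (hpos n).ne'
    have hnonneg : 0 ≤ ω (c + 1) / (ω c * R n 1 * R (n + 1) 1 * B n) := by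
      by_contra! hneg
      exact hCne n ((hC n).trans (Real.sqrt_eq_zero'.2 hneg.le))
    have hCD : C n ^ 2 * (ω c * R n 1 * R (n + 1) 1 * B n) = ω (c + 1) := by
      rw [hC n, Real.sq_sqrt hnonneg, div_mul_cancel₀ _ hD]
    exact eq_div_of_mul_eq hωc (by linear_combination hCD)
  have hdeg (n : ℕ) : ∃ p : Polynomial ℝ, p.degree = n ∧ ∀ x, R n x = p.eval x := by
    obtain ⟨p, hpn, hp⟩ := hRpoly n
    refine ⟨p, (Polynomial.degree_eq_iff_natDegree_eq fun h0 => hR1ne n ?_).2 hpn, hp⟩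
    rw [hp, h0, Polynomial.eval_zero]
  have hR'eq : R' = fun n x => C n * christoffelKernel R 1 n x := funext₂ hR'
  subst hR'eq
  exact ThreeTermRecurrence.unique
    (fun n => exists_degree_eq_mul_christoffelKernel hdeg (hR1ne n) (hCne n)) hrec'
    (ThreeTermRecurrence.mul_christoffelKernel hrec hR1ne hCne hκ)

/-- the three-term recurrence coefficients of the orthonormal
polynomials for the incremented weight `w̃^{(a,b,c+1,d)}`, expressed through
those of the `(a,b,c,d)` family via the Christoffel–Darboux construction. -/
theorem stmt15
    (α β : ℝ) (hα : -1 ≤ α) (hαβ : α < β) (hβ : β ≤ 1)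
    (a b c d : ℝ)
    (w : ℝ → ℝ → ℝ)
    (hw : ∀ e x, w e x = (β - x) ^ a * (x - α) ^ b * (1 - x) ^ e * (1 + x) ^ d)
    (ω : ℝ → ℝ) (hω : ∀ e, ω e = ∫ x in Ioo α β, w e x)
    (R : ℕ → ℝ → ℝ)
    (hRpoly : ∀ n, ∃ p : Polynomial ℝ, p.natDegree = n ∧ ∀ x, R n x = p.eval x)
    (hRorth : ∀ m n, (1 / ω c) * ∫ x in Ioo α β, R m x * R n x * w c x
      = if m = n then 1 else 0)
    (A B : ℕ → ℝ)
    (hrec : ∀ n x, x * R n x = B n * R (n + 1) x + A n * R n x +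
      (if n = 0 then 0 else B (n - 1) * R (n - 1) x))
    (hBne : ∀ n, B n ≠ 0)
    (hR1ne : ∀ n, R n 1 ≠ 0)
    (hpos : ∀ n, 0 < ω c * R n 1 * R (n + 1) 1 * B n)
    (C : ℕ → ℝ)
    (hC : ∀ n, C n = Real.sqrt (ω (c + 1) / (ω c * R n 1 * R (n + 1) 1 * B n)))
    (hCne : ∀ n, C n ≠ 0)
    -- the orthonormal family for the incremented weight, given by the
    -- Christoffel--Darboux sums
    (R' : ℕ → ℝ → ℝ)
    (hR' : ∀ n x, R' n x = C n * ∑ k ∈ Finset.range (n + 1), R k 1 * R k x)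
    (A' B' : ℕ → ℝ)
    (hrec' : ∀ n x, x * R' n x = B' n * R' (n + 1) x + A' n * R' n x +
      (if n = 0 then 0 else B' (n - 1) * R' (n - 1) x)) :
    ∀ n, A' n = (R (n + 2) 1 / R (n + 1) 1) * B (n + 1)
        - (R (n + 1) 1 / R n 1) * B n + A (n + 1) ∧
      B' n = (C n / C (n + 1)) * (R n 1 / R (n + 1) 1) * B n :=
  stmt15_general c ω R hRpoly A B hrec hR1ne hpos C hC hCne R' hR' A' B' hrec'
end

section
/- For the trapezium with ρ(x) = 1−ξx (ξ ∈ (0,1)), the Jacobi operator for multiplication by y is block-tridiagonal with tridiagonal blocks: the expansion of y H_{n,k}^{(a,b,c,d)} in the basis {H_{m,j}^{(a,b,c,d)}} has nonzero coefficients only for m ∈ {n-1, n, n+1} and j ∈ {k-1, k, k+1}. In particular ⟨y H_{n,k}^{(a,b,c,d)}, H_{m,j}^{(a,b,c,d)}⟩ = 0 whenever |m-n| > 1 or |j-k| > 1. -/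
/-!
Substituting `y = (1 - ξx) u` factors the integral into an integral in `x` times
`∫ u P_k(u) P_j(u) (1-u)^d u^c du`. The latter vanishes when `|j - k| > 1`, since `u P_j` has degree
`j + 1`. Otherwise, say `k ≤ j + 1`, the power `ρ^(k+j+c+d+2)` collected in the `x`-integrand is
`ρ^(c+d+2k+1) · ρ^(j+1-k)`, so that integrand is `R_{n-k}^{(a,b,c+d+2k+1)}` against a polynomial of
degree `m + 1 - k`, and it vanishes when `m + 1 < n`. The remaining cases follow by swapping the
roles of `(n, k)` and `(m, j)`.
-/

open MeasureTheory Set Polynomial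

structure IsOrthonormalPolynomials (μ : Measure ℝ) (w : ℝ → ℝ) (Q : ℕ → ℝ → ℝ) : Prop where
  integral_mul_mul : ∀ m n, ∫ x, Q m x * Q n x * w x ∂μ = if m = n then 1 else 0
  exists_natDegree_eq : ∀ n, ∃ p : ℝ[X], p.natDegree = n ∧ ∀ x, Q n x = p.eval x

namespace IsOrthonormalPolynomials

variable {μ : Measure ℝ} {w : ℝ → ℝ} {Q : ℕ → ℝ → ℝ}

theorem exists_sequence (hQ : IsOrthonormalPolynomials μ w Q) :
    ∃ S : Polynomial.Sequence ℝ, ∀ n x, Q n x = (S n).eval x := by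
  choose p hdeg hp using hQ.exists_natDegree_eq
  have hne : ∀ n, p n ≠ 0 := fun n h0 => by
    simpa [hp, h0] using hQ.integral_mul_mul n n
  exact ⟨⟨p, fun n => by rw [degree_eq_natDegree (hne n), hdeg]⟩, hp⟩

theorem integrable_mul (hQ : IsOrthonormalPolynomials μ w Q) (hw : 0 ≤ᵐ[μ] w)
    (hwm : AEStronglyMeasurable w μ) (i l : ℕ) :
    Integrable (fun x => Q i x * Q l x * w x) μ := by
  have hsq : ∀ n, Integrable (fun x => Q n x * Q n x * w x) μ := fun n =>
    Integrable.of_integral_ne_zero (by simp [hQ.integral_mul_mul n n])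
  obtain ⟨S, hS⟩ := hQ.exists_sequence
  refine ((hsq i).add (hsq l)).mono' ?_ ?_
  · simp_rw [hS]
    exact ((S i).continuous.mul (S l).continuous).aestronglyMeasurable.mul hwm
  · filter_upwards [hw] with x hx
    rw [Pi.add_apply, norm_mul, norm_mul, Real.norm_of_nonneg hx, ← add_mul]
    gcongr
    rw [← abs_mul_abs_self (Q i x), ← abs_mul_abs_self (Q l x), Real.norm_eq_abs,
      Real.norm_eq_abs]
    nlinarith [sq_nonneg (|Q i x| - |Q l x|), abs_nonneg (Q i x), abs_nonneg (Q l x)]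

theorem integral_mul_eval_eq_zero (hQ : IsOrthonormalPolynomials μ w Q) (hw : 0 ≤ᵐ[μ] w)
    (hwm : AEStronglyMeasurable w μ) {n : ℕ} {q : ℝ[X]} (hq : q.natDegree < n) :
    ∫ x, Q n x * q.eval x * w x ∂μ = 0 := by
  obtain ⟨S, hS⟩ := hQ.exists_sequence
  have hmem : q ∈ degreeLT ℝ n :=
    mem_degreeLT.mpr (degree_le_natDegree.trans_lt (by exact_mod_cast hq))
  rw [← S.span_degreeLT fun i _ => (leadingCoeff_ne_zero.mpr (S.ne_zero i)).isUnit,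
    show Iio n = (Finset.range n : Set ℕ) by simp,
    Submodule.mem_span_image_finset_iff_exists_fun'] at hmem
  obtain ⟨c, rfl⟩ := hmem
  have hsum : ∀ x, Q n x * (∑ i ∈ Finset.range n, c i • S i).eval x * w x
      = ∑ i ∈ Finset.range n, c i * (Q n x * Q i x * w x) := fun x => by
    simp only [eval_finsetSum, eval_smul, smul_eq_mul, ← hS, Finset.mul_sum, Finset.sum_mul]
    exact Finset.sum_congr rfl fun i _ => by ring
  simp_rw [hsum]
  rw [integral_finsetSum _ fun i _ => (hQ.integrable_mul hw hwm n i).const_mul (c i)]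
  refine Finset.sum_eq_zero fun i hi => ?_
  rw [integral_const_mul, hQ.integral_mul_mul, if_neg (Finset.mem_range.mp hi).ne', mul_zero]

theorem integral_id_mul_mul_eq_zero (hQ : IsOrthonormalPolynomials μ w Q) (hw : 0 ≤ᵐ[μ] w)
    (hwm : AEStronglyMeasurable w μ) {k j : ℕ} (hjk : j + 1 < k) :
    ∫ x, x * Q k x * Q j x * w x ∂μ = 0 := by
  obtain ⟨p, hdeg, hp⟩ := hQ.exists_natDegree_eq j
  have hXp : (X * p).natDegree < k :=
    (natDegree_mul_le.trans (by rw [natDegree_X, hdeg, add_comm])).trans_lt hjk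
  refine Eq.trans (integral_congr_ae (ae_of_all _ fun x => ?_))
    (hQ.integral_mul_eval_eq_zero hw hwm hXp)
  simp only [eval_mul, eval_X, ← hp]
  ring

end IsOrthonormalPolynomials

theorem setIntegral_regionBetween {α E : Type*} [MeasurableSpace α] [NormedAddCommGroup E]
    [NormedSpace ℝ E] {μ : Measure α} [SFinite μ] {f g : α → ℝ} {s : Set α}
    (hf : Measurable f) (hg : Measurable g) (hs : MeasurableSet s) {F : α × ℝ → E}
    (hF : IntegrableOn F (regionBetween f g s) (μ.prod volume)) :
    ∫ z in regionBetween f g s, F z ∂μ.prod volume =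
      ∫ x in s, (∫ y in Ioo (f x) (g x), F (x, y)) ∂μ := by
  have hmeas := measurableSet_regionBetween hf hg hs
  rw [← integral_indicator hmeas, integral_prod _ ((integrable_indicator_iff hmeas).mpr hF),
    ← integral_indicator hs]
  congr 1; ext x
  by_cases hx : x ∈ s
  · rw [indicator_of_mem hx, ← integral_indicator measurableSet_Ioo]
    congr 1; ext y
    simp [regionBetween, indicator, hx]
  · simp [regionBetween, indicator, hx]

theorem setIntegral_Ioo_zero_eq_mul_comp {E : Type*} [NormedAddCommGroup E] [NormedSpace ℝ E]
    (g : ℝ → E) {r : ℝ} (hr : 0 < r) :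
    ∫ y in Ioo 0 r, g y = r • ∫ u in Ioo 0 1, g (r * u) := by
  rw [← integral_Ioc_eq_integral_Ioo, ← integral_Ioc_eq_integral_Ioo,
    ← intervalIntegral.integral_of_le hr.le, ← intervalIntegral.integral_of_le zero_le_one,
    intervalIntegral.integral_comp_mul_left g hr.ne', mul_zero, mul_one, smul_smul,
    mul_inv_cancel₀ hr.ne', one_smul]

theorem setIntegral_regionBetween_zero_eq_mul {α : Type*} [MeasurableSpace α] {μ : Measure α}
    [SFinite μ] {s : Set α} {t : α → ℝ} (hs : MeasurableSet s) (ht : Measurable t)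
    (ht_pos : ∀ x ∈ s, 0 < t x) {F : α × ℝ → ℝ} {A : α → ℝ} {G : ℝ → ℝ}
    (hF : IntegrableOn F (regionBetween 0 t s) (μ.prod volume))
    (hfac : ∀ x ∈ s, ∀ u ∈ Ioo (0 : ℝ) 1, t x * F (x, t x * u) = A x * G u) :
    ∫ z in regionBetween 0 t s, F z ∂μ.prod volume =
      (∫ x in s, A x ∂μ) * ∫ u in Ioo 0 1, G u := by
  rw [setIntegral_regionBetween measurable_zero ht hs hF, ← integral_mul_const]
  refine setIntegral_congr_fun hs fun x hx => ?_
  rw [Pi.zero_apply, setIntegral_Ioo_zero_eq_mul_comp _ (ht_pos x hx), smul_eq_mul,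
    ← integral_const_mul, ← integral_const_mul]
  exact setIntegral_congr_fun measurableSet_Ioo (hfac x hx)

def trapezium (ξ : ℝ) : Set (ℝ × ℝ) := regionBetween 0 (fun x => 1 - ξ * x) (Ioo 0 1)

/-- `H_{n,k}^{(a,b,c,d)}`, where `R e` are the orthonormal polynomials on `(0, 1)` for the weight
`(1 - x)^a x^b (1 - ξx)^e` and `P` those for `(1 - y)^d y^c`. -/
noncomputable def trapeziumOP (R : ℝ → ℕ → ℝ → ℝ) (P : ℕ → ℝ → ℝ) (c d ξ : ℝ) (n k : ℕ)
    (z : ℝ × ℝ) : ℝ :=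
  R (c + d + 2 * k + 1) (n - k) z.1 * (1 - ξ * z.1) ^ k * P k (z.2 / (1 - ξ * z.1))

noncomputable def trapeziumWeight (a b c d ξ : ℝ) (z : ℝ × ℝ) : ℝ :=
  (1 - z.1) ^ a * z.1 ^ b * z.2 ^ c * (1 - ξ * z.1 - z.2) ^ d

section Trapezium

variable {a b c d ξ : ℝ} {R : ℝ → ℕ → ℝ → ℝ} {P : ℕ → ℝ → ℝ}

theorem one_sub_mul_pos_of_mem_Ioo (hξ : ξ < 1) {x : ℝ} (hx : x ∈ Ioo (0 : ℝ) 1) :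
    0 < 1 - ξ * x := by
  nlinarith [hx.1, hx.2]

theorem trapeziumOP_integrand_factor {x u : ℝ} (ht : 0 < 1 - ξ * x) (hu : u ∈ Ioo (0 : ℝ) 1)
    (n k m j : ℕ) :
    (1 - ξ * x) * ((1 - ξ * x) * u * trapeziumOP R P c d ξ n k (x, (1 - ξ * x) * u) *
      trapeziumOP R P c d ξ m j (x, (1 - ξ * x) * u) *
      trapeziumWeight a b c d ξ (x, (1 - ξ * x) * u)) =
    (R (c + d + 2 * k + 1) (n - k) x * R (c + d + 2 * j + 1) (m - j) x * ((1 - x) ^ a * x ^ b) *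
      (1 - ξ * x) ^ (c + d + k + j + 2)) * (u * P k u * P j u * ((1 - u) ^ d * u ^ c)) := by
  have hpow : (1 - ξ * x) ^ (c + d + k + j + 2) = (1 - ξ * x) ^ c * (1 - ξ * x) ^ d *
      ((1 - ξ * x) ^ k * (1 - ξ * x) ^ j * (1 - ξ * x) ^ 2) := by
    rw [Real.rpow_add ht, Real.rpow_add ht, Real.rpow_add ht, Real.rpow_add ht,
      Real.rpow_natCast, Real.rpow_natCast, Real.rpow_two]
    ring
  have hsub : 1 - ξ * x - (1 - ξ * x) * u = (1 - ξ * x) * (1 - u) := by ring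
  simp only [trapeziumOP, trapeziumWeight, mul_div_cancel_left₀ u ht.ne', hsub,
    Real.mul_rpow ht.le hu.1.le, Real.mul_rpow ht.le (sub_nonneg.mpr hu.2.le), hpow]
  ring

theorem integral_x_factor_eq_zero (hξ : ξ < 1)
    (hR : ∀ e, IsOrthonormalPolynomials (volume.restrict (Ioo 0 1))
      (fun x => (1 - x) ^ a * x ^ b * (1 - ξ * x) ^ e) (R e))
    {n k m j : ℕ} (hkn : k ≤ n) (hjm : j ≤ m) (hmn : m + 1 < n) (hkj : k ≤ j + 1) :
    ∫ x in Ioo 0 1, R (c + d + 2 * k + 1) (n - k) x * R (c + d + 2 * j + 1) (m - j) x *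
      ((1 - x) ^ a * x ^ b) * (1 - ξ * x) ^ (c + d + k + j + 2) = 0 := by
  obtain ⟨p, hpdeg, hp⟩ := (hR (c + d + 2 * j + 1)).exists_natDegree_eq (m - j)
  set q := p * (C (-ξ) * X + C 1) ^ (j + 1 - k)
  have hq : q.natDegree < n - k := by
    have : q.natDegree ≤ m - j + (j + 1 - k) * 1 := natDegree_mul_le.trans
      (add_le_add hpdeg.le
        (natDegree_pow_le_of_le (j + 1 - k) (natDegree_linear_le (a := -ξ) (b := 1))))
    omega
  have hw : 0 ≤ᵐ[volume.restrict (Ioo 0 1)]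
      fun x => (1 - x) ^ a * x ^ b * (1 - ξ * x) ^ (c + d + 2 * k + 1) :=
    ae_restrict_of_forall_mem measurableSet_Ioo fun x hx =>
      mul_nonneg (mul_nonneg (Real.rpow_nonneg (sub_nonneg.mpr hx.2.le) a)
        (Real.rpow_nonneg hx.1.le b)) (Real.rpow_nonneg (one_sub_mul_pos_of_mem_Ioo hξ hx).le _)
  refine Eq.trans (setIntegral_congr_fun measurableSet_Ioo fun x hx => ?_)
    ((hR _).integral_mul_eval_eq_zero hw (by fun_prop) hq)
  have hexp : c + d + k + j + 2 = c + d + 2 * k + 1 + ((j + 1 - k : ℕ) : ℝ) := by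
    push_cast [Nat.cast_sub hkj]; ring
  simp only [q, eval_mul, eval_pow, eval_add, eval_C, eval_X, ← hp, hexp,
    Real.rpow_add (one_sub_mul_pos_of_mem_Ioo hξ hx), Real.rpow_natCast]
  ring

theorem integral_mul_trapeziumOP_eq_zero (hξ : ξ < 1)
    (hR : ∀ e, IsOrthonormalPolynomials (volume.restrict (Ioo 0 1))
      (fun x => (1 - x) ^ a * x ^ b * (1 - ξ * x) ^ e) (R e))
    (hP : IsOrthonormalPolynomials (volume.restrict (Ioo 0 1)) (fun y => (1 - y) ^ d * y ^ c) P)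
    {n k m j : ℕ} (hkn : k ≤ n) (hjm : j ≤ m) (h : j + 1 < k ∨ m + 1 < n ∧ k ≤ j + 1) :
    ∫ z in trapezium ξ, z.2 * trapeziumOP R P c d ξ n k z * trapeziumOP R P c d ξ m j z *
      trapeziumWeight a b c d ξ z = 0 := by
  by_cases hF : IntegrableOn (fun z => z.2 * trapeziumOP R P c d ξ n k z *
      trapeziumOP R P c d ξ m j z * trapeziumWeight a b c d ξ z) (trapezium ξ)
  swap
  · exact integral_undef hF
  rw [Measure.volume_eq_prod] at hF ⊢
  rw [trapezium, setIntegral_regionBetween_zero_eq_mul measurableSet_Ioo (by fun_prop)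
    (fun x hx => one_sub_mul_pos_of_mem_Ioo hξ hx) hF
    (fun x hx u hu => trapeziumOP_integrand_factor (one_sub_mul_pos_of_mem_Ioo hξ hx) hu n k m j)]
  rcases h with hkj | ⟨hmn, hkj⟩
  · have hw : 0 ≤ᵐ[volume.restrict (Ioo 0 1)] fun y : ℝ => (1 - y) ^ d * y ^ c :=
      ae_restrict_of_forall_mem measurableSet_Ioo fun y hy =>
        mul_nonneg (Real.rpow_nonneg (sub_nonneg.mpr hy.2.le) d) (Real.rpow_nonneg hy.1.le c)
    rw [hP.integral_id_mul_mul_eq_zero hw (by fun_prop) hkj, mul_zero]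
  · rw [integral_x_factor_eq_zero hξ hR hkn hjm hmn hkj, zero_mul]

end Trapezium

theorem stmt19_general
    (ξ : ℝ) (hξ1 : ξ < 1)
    (a b c d : ℝ)
    (ρ : ℝ → ℝ) (hρ : ∀ x, ρ x = 1 - ξ * x)
    (R : ℝ → ℕ → ℝ → ℝ) (P : ℕ → ℝ → ℝ)
    (hRorth : ∀ e : ℝ, ∀ m n : ℕ, ∫ x in Ioo (0 : ℝ) 1,
        R e m x * R e n x * ((1 - x) ^ a * x ^ b * (1 - ξ * x) ^ e)
        = if m = n then 1 else 0)
    (hRpoly : ∀ e m, ∃ p : Polynomial ℝ, p.natDegree = m ∧ ∀ x, R e m x = p.eval x)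
    (hPorth : ∀ k j : ℕ, ∫ y in Ioo (0 : ℝ) 1,
        P k y * P j y * ((1 - y) ^ d * y ^ c) = if k = j then 1 else 0)
    (hPpoly : ∀ k, ∃ p : Polynomial ℝ, p.natDegree = k ∧ ∀ y, P k y = p.eval y)
    (Ω : Set (ℝ × ℝ))
    (hΩ : Ω = {z : ℝ × ℝ | 0 < z.1 ∧ z.1 < 1 ∧ 0 < z.2 ∧ z.2 < 1 - ξ * z.1})
    (H : ℕ → ℕ → ℝ × ℝ → ℝ)
    (hH : ∀ n k z, H n k z = R (c + d + 2 * (k : ℝ) + 1) (n - k) z.1 *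
        ρ z.1 ^ (k : ℕ) * P k (z.2 / ρ z.1))
    (W : ℝ × ℝ → ℝ)
    (hW : ∀ z : ℝ × ℝ,
      W z = (1 - z.1) ^ a * z.1 ^ b * z.2 ^ c * (1 - ξ * z.1 - z.2) ^ d) :
    ∀ n k m j : ℕ, k ≤ n → j ≤ m →
      (1 < |(m : ℤ) - (n : ℤ)| ∨ 1 < |(j : ℤ) - (k : ℤ)|) →
      ∫ z in Ω, z.2 * H n k z * H m j z * W z = 0 := by
  intro n k m j hkn hjm hcase
  obtain rfl : Ω = trapezium ξ := by
    rw [hΩ]; ext z; simp [trapezium, regionBetween, and_assoc]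
  obtain rfl : H = trapeziumOP R P c d ξ := by
    funext n k z; rw [hH, hρ, trapeziumOP]
  obtain rfl : W = trapeziumWeight a b c d ξ := funext hW
  have hR e : IsOrthonormalPolynomials _ _ (R e) := ⟨hRorth e, hRpoly e⟩
  have hP : IsOrthonormalPolynomials _ _ P := ⟨hPorth, hPpoly⟩
  obtain h | h : (j + 1 < k ∨ m + 1 < n ∧ k ≤ j + 1) ∨ (k + 1 < j ∨ n + 1 < m ∧ j ≤ k + 1) := by
    rw [lt_abs, lt_abs] at hcase; omega
  · exact integral_mul_trapeziumOP_eq_zero hξ1 hR hP hkn hjm h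
  · have hswap : ∀ z : ℝ × ℝ, z.2 * trapeziumOP R P c d ξ n k z * trapeziumOP R P c d ξ m j z =
        z.2 * trapeziumOP R P c d ξ m j z * trapeziumOP R P c d ξ n k z := fun z => by ring
    simp only [hswap]
    exact integral_mul_trapeziumOP_eq_zero hξ1 hR hP hjm hkn h

/-- on the trapezium, the Jacobi operator for multiplication by
`y` is block-tridiagonal with tridiagonal blocks:
`⟨y H_{n,k}^{(a,b,c,d)}, H_{m,j}^{(a,b,c,d)}⟩ = 0` whenever `|m-n| > 1` or
`|j-k| > 1`. -/
theorem stmt19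
    (ξ : ℝ) (hξ0 : 0 < ξ) (hξ1 : ξ < 1)
    (a b c d : ℝ)
    (ρ : ℝ → ℝ) (hρ : ∀ x, ρ x = 1 - ξ * x)
    (R : ℝ → ℕ → ℝ → ℝ) (P : ℕ → ℝ → ℝ)
    (hRorth : ∀ e : ℝ, ∀ m n : ℕ, ∫ x in Ioo (0 : ℝ) 1,
        R e m x * R e n x * ((1 - x) ^ a * x ^ b * (1 - ξ * x) ^ e)
        = if m = n then 1 else 0)
    (hRpoly : ∀ e m, ∃ p : Polynomial ℝ, p.natDegree = m ∧ ∀ x, R e m x = p.eval x)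
    (hPorth : ∀ k j : ℕ, ∫ y in Ioo (0 : ℝ) 1,
        P k y * P j y * ((1 - y) ^ d * y ^ c) = if k = j then 1 else 0)
    (hPpoly : ∀ k, ∃ p : Polynomial ℝ, p.natDegree = k ∧ ∀ y, P k y = p.eval y)
    -- three-term recurrence of the shifted Jacobi polynomials:
    -- t P̃_k = δ_k P̃_{k+1} + γ_k P̃_k + δ_{k-1} P̃_{k-1}
    (δc γc : ℕ → ℝ)
    (hPrec : ∀ k t, t * P k t = δc k * P (k + 1) t + γc k * P k t +
      (if k = 0 then 0 else δc (k - 1) * P (k - 1) t))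
    (Ω : Set (ℝ × ℝ))
    (hΩ : Ω = {z : ℝ × ℝ | 0 < z.1 ∧ z.1 < 1 ∧ 0 < z.2 ∧ z.2 < 1 - ξ * z.1})
    (H : ℕ → ℕ → ℝ × ℝ → ℝ)
    (hH : ∀ n k z, H n k z = R (c + d + 2 * (k : ℝ) + 1) (n - k) z.1 *
        ρ z.1 ^ (k : ℕ) * P k (z.2 / ρ z.1))
    (W : ℝ × ℝ → ℝ)
    (hW : ∀ z : ℝ × ℝ,
      W z = (1 - z.1) ^ a * z.1 ^ b * z.2 ^ c * (1 - ξ * z.1 - z.2) ^ d) :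
    ∀ n k m j : ℕ, k ≤ n → j ≤ m →
      (1 < |(m : ℤ) - (n : ℤ)| ∨ 1 < |(j : ℤ) - (k : ℤ)|) →
      ∫ z in Ω, z.2 * H n k z * H m j z * W z = 0 :=
  stmt19_general ξ hξ1 a b c d ρ hρ R P hRorth hRpoly hPorth hPpoly Ω hΩ H hH W hW
end
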